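/- Lemma 1 (ladder strings lie in the Hamiltonian algebra): there exist choice functions a, b : Fin N → Fin 2 such that, writing P^u_i, \bar P^u_i, P^d_i, \bar P^d_i for the corresponding X/Y letters, the following matrices all lie in g(S₁): for every i with 1 ≤ i ≤ N−1, Complex.I • P(→X_{u(0)}(P^u_i)_{u(i)}), Complex.I • P(→Y_{u(0)}(\bar P^u_i)_{u(i)}), Complex.I • P(→X_{d(0)}(P^d_i)_{d(i)}), and Complex.I • P(→Y_{d(0)}(\bar P^d_i)_{d(i)}); and for every i with 1 ≤ i ≤ N−2, Complex.I • P(→(P^u_i)_{u(i)}(\bar P^u_{i+1})_{u(i+1)}), Complex.I • P(→(\bar P^u_i)_{u(i)}(P^u_{i+1})_{u(i+1)}), Complex.I • P(→(P^d_i)_{d(i)}(\bar P^d_{i+1})_{d(i+1)}), and Complex.I • P(→(\bar P^d_i)_{d(i)}(P^d_{i+1})_{d(i+1)}). -/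

import Mathlib

open Matrix

attribute [local instance 100] LieRing.ofAssociativeRing

/-- The four 2×2 Pauli matrices: identity, X, Y, Z. -/
noncomputable def pauli : Fin 4 → Matrix (Fin 2) (Fin 2) ℂ
  | 0 => 1
  | 1 => !![0, 1; 1, 0]
  | 2 => !![0, -Complex.I; Complex.I, 0]
  | 3 => !![1, 0; 0, -1]

/-- The matrix of an `n`-qubit Pauli string `p : Fin n → Fin 4`,
the Kronecker product of the `pauli (p i)`. -/
noncomputable def PauliMat {n : ℕ} (p : Fin n → Fin 4) :
    Matrix (Fin n → Fin 2) (Fin n → Fin 2) ℂ :=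
  Matrix.of fun x y => ∏ i, pauli (p i) (x i) (y i)

/-- The Hamiltonian algebra of a set of Pauli strings: the Lie ℝ-subalgebra of the
complex matrices generated by `{I • P(p) : p ∈ S}`. -/
noncomputable def hamAlg {n : ℕ} (S : Set (Fin n → Fin 4)) :
    LieSubalgebra ℝ (Matrix (Fin n → Fin 2) (Fin n → Fin 2) ℂ) :=
  LieSubalgebra.lieSpan ℝ _ ((fun p => Complex.I • PauliMat p) '' S)

/-- The Pauli string `→A_iB_j`: letter `A` at `i`, letter `B` at `j`, `Z` strictly
between `i` and `j`, identity elsewhere. -/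
def ladderString {n : ℕ} (i j : Fin n) (A B : Fin 4) : Fin n → Fin 4 :=
  fun k => if k = i then A else if k = j then B
    else if min i j < k ∧ k < max i j then 3 else 0

/-- The Pauli string `Z_kZ_l`. -/
def zzString {n : ℕ} (k l : Fin n) : Fin n → Fin 4 :=
  fun m => if m = k ∨ m = l then 3 else 0

/-- The Pauli string `Z_k`. -/
def zString {n : ℕ} (k : Fin n) : Fin n → Fin 4 :=
  fun m => if m = k then 3 else 0

/-- A choice of letter: `X` if `c = 0`, `Y` if `c = 1`. -/
def ltr (c : Fin 2) : Fin 4 := if c = 0 then 1 else 2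

/-- The opposite letter: `Y` if `c = 0`, `X` if `c = 1`. -/
def ltrBar (c : Fin 2) : Fin 4 := if c = 0 then 2 else 1

/-- Pauli strings of the Jordan–Wigner transformed hopping terms of one spin species,
with sites embedded via `v : Fin N → Fin (2N)` and hoppings on the edges of `G`. -/
def Sspin {N : ℕ} (G : SimpleGraph (Fin N)) (v : Fin N → Fin (2 * N)) :
    Set (Fin (2 * N) → Fin 4) :=
  {p | ∃ k l : Fin N, G.Adj k l ∧
    (p = ladderString (v k) (v l) 1 1 ∨ p = ladderString (v k) (v l) 2 2)}

/-- Pauli strings of the Jordan–Wigner transformed free fermion model. -/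
def Sfree {N : ℕ} (G : SimpleGraph (Fin N)) (u d : Fin N → Fin (2 * N)) :
    Set (Fin (2 * N) → Fin 4) :=
  Sspin G u ∪ Sspin G d

/-- Pauli strings of the model with a single on-site Coulomb interaction at fermion
site `i0` (interaction term `Z_{u i0} Z_{d i0}`). -/
def Sint {N : ℕ} (G : SimpleGraph (Fin N)) (u d : Fin N → Fin (2 * N)) (i0 : Fin N) :
    Set (Fin (2 * N) → Fin 4) :=
  Sfree G u d ∪ {zzString (u i0) (d i0)}

/-!
Under the Jordan–Wigner transformation the strings `Z ⋯ Z X` and `Z ⋯ Z Y` are the Majorana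
operators `γ_(k, c)` of the fermionic modes, which pairwise anticommute, and the hopping strings
`X X`, `Y Y` along an edge `k l` of `G` are products `γ_(k, c) γ_(l, c + 1)`. For distinct `μ, ν, ρ`
the strings `γ_μ γ_ν` and `γ_ν γ_ρ` anticommute, so the bracket of `I γ_μ γ_ν` and `I γ_ν γ_ρ` is
a real multiple of `I γ_μ γ_ρ`. Walking along `G` from a root mode `r` thus puts every
`I γ_(r, c) γ_(j, c + s j)` in the algebra, for some shift `s j`; combining two of these gives
`I γ_(i, c + s i) γ_(j, c + s j)`, and every ladder string is such a product of two Majoranas.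
-/

/-- In the encoding `0, 1, 2, 3 = I, X, Y, Z` of `pauli`, Pauli letters multiply as bitwise
XOR, up to the phase `I ^ letterPhase a b`. -/
def letterMul (a b : Fin 4) : Fin 4 := a ^^^ b

def letterPhase : Fin 4 → Fin 4 → ℕ
  | 1, 2 => 1 | 2, 3 => 1 | 3, 1 => 1
  | 2, 1 => 3 | 3, 2 => 3 | 1, 3 => 3
  | _, _ => 0

lemma pauli_mul_pauli (a b : Fin 4) :
    pauli a * pauli b = Complex.I ^ letterPhase a b • pauli (letterMul a b) := by
  fin_cases a <;> fin_cases b <;> ext i j <;> fin_cases i <;> fin_cases j <;>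
    simp [pauli, letterMul, letterPhase, Matrix.mul_apply, Fin.sum_univ_two, pow_succ]

def stringMul {n : ℕ} (p q : Fin n → Fin 4) : Fin n → Fin 4 := fun i => letterMul (p i) (q i)

def phaseSum {n : ℕ} (p q : Fin n → Fin 4) : ℕ := ∑ i, letterPhase (p i) (q i)

/-- Two Pauli strings anticommute iff this form equals `1`. -/
def symplecticForm {n : ℕ} (p q : Fin n → Fin 4) : ZMod 2 := (phaseSum p q : ZMod 2)

lemma PauliMat_mul_PauliMat {n : ℕ} (p q : Fin n → Fin 4) :
    PauliMat p * PauliMat q = Complex.I ^ phaseSum p q • PauliMat (stringMul p q) := by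
  ext x y
  simp only [Matrix.mul_apply, PauliMat, Matrix.of_apply, Matrix.smul_apply, smul_eq_mul,
    ← Finset.prod_mul_distrib]
  rw [← Fintype.prod_sum fun i j => pauli (p i) (x i) j * pauli (q i) j (y i), phaseSum,
    ← Finset.prod_pow_eq_pow_sum, ← Finset.prod_mul_distrib]
  refine Finset.prod_congr rfl fun i _ => ?_
  simpa [Matrix.mul_apply, stringMul] using congrFun₂ (pauli_mul_pauli (p i) (q i)) (x i) (y i)

lemma letterPhase_add_letterPhase_swap (a b : Fin 4) : 4 ∣ letterPhase a b + letterPhase b a := by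
  fin_cases a <;> fin_cases b <;> decide

lemma stringMul_comm {n : ℕ} (p q : Fin n → Fin 4) : stringMul p q = stringMul q p := by
  funext i
  exact Fin.xor_comm _ _

lemma I_pow_phaseSum_swap {n : ℕ} {p q : Fin n → Fin 4} (hpq : Odd (phaseSum p q)) :
    Complex.I ^ phaseSum q p = -Complex.I ^ phaseSum p q := by
  have hsum : Complex.I ^ phaseSum p q * Complex.I ^ phaseSum q p = 1 := by
    obtain ⟨k, hk⟩ : 4 ∣ phaseSum p q + phaseSum q p := by
      rw [phaseSum, phaseSum, ← Finset.sum_add_distrib]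
      exact Finset.dvd_sum fun i _ => letterPhase_add_letterPhase_swap _ _
    rw [← pow_add, hk, pow_mul, Complex.I_pow_four, one_pow]
  have hsq : (Complex.I ^ phaseSum p q) ^ 2 = -1 := by
    obtain ⟨k, hk⟩ := hpq
    rw [← pow_mul, hk, show (2 * k + 1) * 2 = 4 * k + 2 by ring, pow_add, pow_mul,
      Complex.I_pow_four, one_pow, one_mul, Complex.I_sq]
  linear_combination (-Complex.I ^ phaseSum p q) * hsum + Complex.I ^ phaseSum q p * hsq

/-- The Lie bracket of `I • P p` and `I • P q` is a nonzero real multiple of `I • P (p q)`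
when `p` and `q` anticommute. -/
lemma smul_PauliMat_stringMul_mem {n : ℕ}
    {L : LieSubalgebra ℝ (Matrix (Fin n → Fin 2) (Fin n → Fin 2) ℂ)} {p q : Fin n → Fin 4}
    (hp : Complex.I • PauliMat p ∈ L) (hq : Complex.I • PauliMat q ∈ L)
    (hpq : symplecticForm p q = 1) :
    Complex.I • PauliMat (stringMul p q) ∈ L := by
  obtain ⟨k, hk⟩ : Odd (phaseSum p q) := ZMod.natCast_eq_one_iff_odd.mp hpq
  have hIpow : Complex.I ^ phaseSum p q = ((-1 : ℝ) ^ k : ℝ) * Complex.I := by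
    rw [hk, pow_succ, pow_mul, Complex.I_sq]
    push_cast
    ring
  have hlie : ⁅Complex.I • PauliMat p, Complex.I • PauliMat q⁆ =
      (-2 * (-1) ^ k : ℝ) • (Complex.I • PauliMat (stringMul p q)) := by
    rw [Ring.lie_def, smul_mul_smul_comm, smul_mul_smul_comm, PauliMat_mul_PauliMat,
      PauliMat_mul_PauliMat, stringMul_comm q p, I_pow_phaseSum_swap ⟨k, hk⟩, hIpow,
      ← Complex.coe_smul, smul_smul, smul_smul, smul_smul, ← sub_smul]
    congr 1
    push_cast
    linear_combination (2 * (-1 : ℂ) ^ k * Complex.I) * Complex.I_sq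
  have hne : (-2 * (-1) ^ k : ℝ) ≠ 0 := by simp
  rw [← inv_smul_smul₀ hne (Complex.I • PauliMat (stringMul p q)), ← hlie]
  exact L.smul_mem _ (L.lie_mem hp hq)

lemma symplecticForm_stringMul_left {n : ℕ} (p q r : Fin n → Fin 4) :
    symplecticForm (stringMul p q) r = symplecticForm p r + symplecticForm q r := by
  have hletter : ∀ a b c : Fin 4, ((letterPhase (letterMul a b) c : ℕ) : ZMod 2) =
      letterPhase a c + letterPhase b c := by decide
  simp only [symplecticForm, phaseSum, Nat.cast_sum, stringMul, hletter,
    Finset.sum_add_distrib]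

lemma symplecticForm_stringMul_right {n : ℕ} (p q r : Fin n → Fin 4) :
    symplecticForm p (stringMul q r) = symplecticForm p q + symplecticForm p r := by
  have hletter : ∀ a b c : Fin 4, ((letterPhase a (letterMul b c) : ℕ) : ZMod 2) =
      letterPhase a b + letterPhase a c := by decide
  simp only [symplecticForm, phaseSum, Nat.cast_sum, stringMul, hletter,
    Finset.sum_add_distrib]

lemma stringMul_stringMul_cancel {n : ℕ} (p q r : Fin n → Fin 4) :
    stringMul (stringMul p q) (stringMul q r) = stringMul p r := by
  have hletter : ∀ a b c : Fin 4, letterMul (letterMul a b) (letterMul b c) = letterMul a c := by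
    decide
  funext i
  exact hletter _ _ _

/-- The Jordan–Wigner image of a Majorana operator on the mode at qubit `a`. -/
def majorana {n : ℕ} (a : Fin n) (A : Fin 4) : Fin n → Fin 4 :=
  fun m => if m = a then A else if m < a then 3 else 0

section Majorana

variable {n : ℕ} {a m : Fin n} {A : Fin 4}

lemma majorana_self : majorana a A a = A := if_pos rfl

lemma majorana_of_lt (h : m < a) : majorana a A m = 3 := by
  rw [majorana, if_neg h.ne, if_pos h]

lemma majorana_of_gt (h : a < m) : majorana a A m = 0 := by
  rw [majorana, if_neg h.ne', if_neg h.not_gt]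

end Majorana

lemma symplecticForm_majorana {n : ℕ} (a b : Fin n) (c c' : Fin 2) :
    symplecticForm (majorana a (ltr c)) (majorana b (ltr c')) =
      if a = b ∧ c = c' then 0 else 1 := by
  rw [symplecticForm, phaseSum, Nat.cast_sum, Fintype.sum_eq_single (min a b)]
  · rcases lt_trichotomy a b with hab | rfl | hab
    · rw [min_eq_left hab.le, majorana_self, majorana_of_lt hab, if_neg fun h => hab.ne h.1]
      fin_cases c <;> rfl
    · rw [min_self, majorana_self, majorana_self]
      simp only [true_and]
      revert c c'
      decide
    · rw [min_eq_right hab.le, majorana_self, majorana_of_lt hab, if_neg fun h => hab.ne' h.1]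
      fin_cases c' <;> rfl
  · intro m hm
    rcases lt_or_gt_of_ne hm with hlt | hgt
    · rw [lt_min_iff] at hlt
      rw [majorana_of_lt hlt.1, majorana_of_lt hlt.2]
      rfl
    · rcases min_lt_iff.mp hgt with ham | hbm
      · rw [majorana_of_gt ham]
        generalize majorana b (ltr c') m = B
        revert B
        decide
      · rw [majorana_of_gt hbm]
        generalize majorana a (ltr c) m = A
        revert A
        decide

lemma ladderString_eq_stringMul_majorana {n : ℕ} {a b : Fin n} (hab : a < b) (A B : Fin 4) :
    ladderString a b A B = stringMul (majorana a (letterMul 3 A)) (majorana b B) := by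
  funext m
  simp only [ladderString, stringMul, min_eq_left hab.le, max_eq_right hab.le]
  rcases lt_trichotomy m a with hma | rfl | ham
  · rw [if_neg hma.ne, if_neg (hma.trans hab).ne, if_neg fun h => h.1.not_gt hma,
      majorana_of_lt hma, majorana_of_lt (hma.trans hab)]
    rfl
  · rw [if_pos rfl, majorana_self, majorana_of_lt hab]
    revert A
    decide
  · rcases lt_trichotomy m b with hmb | rfl | hbm
    · rw [if_neg ham.ne', if_neg hmb.ne, if_pos ⟨ham, hmb⟩, majorana_of_gt ham,
        majorana_of_lt hmb]
      rfl
    · rw [if_neg ham.ne', if_pos rfl, majorana_of_gt ham, majorana_self]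
      revert B
      decide
    · rw [if_neg ham.ne', if_neg hbm.ne', if_neg fun h => h.2.not_gt hbm, majorana_of_gt ham,
        majorana_of_gt hbm]
      rfl

lemma fin_two_add_one_add_one (c : Fin 2) : c + 1 + 1 = c := by
  revert c
  decide

def jwMajorana {n N : ℕ} (v : Fin N → Fin n) (μ : Fin N × Fin 2) : Fin n → Fin 4 :=
  majorana (v μ.1) (ltr μ.2)

lemma symplecticForm_jwMajorana {n N : ℕ} {v : Fin N → Fin n} (hv : Function.Injective v)
    (μ ν : Fin N × Fin 2) :
    symplecticForm (jwMajorana v μ) (jwMajorana v ν) = if μ = ν then 0 else 1 := by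
  simp only [jwMajorana, symplecticForm_majorana, hv.eq_iff, Prod.ext_iff]

def MajoranaBilinearMem {n N : ℕ} (L : LieSubalgebra ℝ (Matrix (Fin n → Fin 2) (Fin n → Fin 2) ℂ))
    (v : Fin N → Fin n) (μ ν : Fin N × Fin 2) : Prop :=
  Complex.I • PauliMat (stringMul (jwMajorana v μ) (jwMajorana v ν)) ∈ L

namespace MajoranaBilinearMem

variable {n N : ℕ} {L : LieSubalgebra ℝ (Matrix (Fin n → Fin 2) (Fin n → Fin 2) ℂ)}
  {v : Fin N → Fin n} {μ ν ρ : Fin N × Fin 2}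

lemma symm (h : MajoranaBilinearMem L v μ ν) : MajoranaBilinearMem L v ν μ := by
  rwa [MajoranaBilinearMem, stringMul_comm]

/-- `γ_μ γ_ν` and `γ_ν γ_ρ` anticommute, and their product is `γ_μ γ_ρ` since `γ_ν² = 1`. -/
lemma trans (hv : Function.Injective v) (hμν : μ ≠ ν) (hνρ : ν ≠ ρ) (hμρ : μ ≠ ρ)
    (h₁ : MajoranaBilinearMem L v μ ν) (h₂ : MajoranaBilinearMem L v ν ρ) :
    MajoranaBilinearMem L v μ ρ := by
  have hanti : symplecticForm (stringMul (jwMajorana v μ) (jwMajorana v ν))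
      (stringMul (jwMajorana v ν) (jwMajorana v ρ)) = 1 := by
    simp only [symplecticForm_stringMul_left, symplecticForm_stringMul_right,
      symplecticForm_jwMajorana hv, if_neg hμν, if_neg hνρ, if_neg hμρ]
    decide
  have h := smul_PauliMat_stringMul_mem h₁ h₂ hanti
  rwa [stringMul_stringMul_cancel] at h

lemma ladderString_mem (hv : StrictMono v) {i j : Fin N} (hij : i < j) {c c' : Fin 2}
    (h : MajoranaBilinearMem L v (i, c + 1) (j, c')) :
    Complex.I • PauliMat (ladderString (v i) (v j) (ltr c) (ltr c')) ∈ L := by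
  have hltr : ∀ c : Fin 2, letterMul 3 (ltr c) = ltr (c + 1) := by decide
  rwa [ladderString_eq_stringMul_majorana (hv hij), hltr]

end MajoranaBilinearMem

section Graph

variable {N : ℕ} {G : SimpleGraph (Fin N)} {v : Fin N → Fin (2 * N)}
  {L : LieSubalgebra ℝ (Matrix (Fin (2 * N) → Fin 2) (Fin (2 * N) → Fin 2) ℂ)}

/-- The hopping strings `X X` and `Y Y` along an edge `k < l` are the products
`γ_(k,Y) γ_(l,X)` and `γ_(k,X) γ_(l,Y)`. -/
lemma MajoranaBilinearMem.of_adj (hv : StrictMono v)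
    (hS : ∀ p ∈ Sspin G v, Complex.I • PauliMat p ∈ L) {k l : Fin N} (hkl : G.Adj k l)
    (c : Fin 2) : MajoranaBilinearMem L v (k, c) (l, c + 1) := by
  have hlt : ∀ {k l : Fin N}, G.Adj k l → k < l → ∀ c : Fin 2,
      MajoranaBilinearMem L v (k, c) (l, c + 1) := by
    intro k l hkl hlt c
    have hXX := hS _ ⟨k, l, hkl, Or.inl rfl⟩
    have hYY := hS _ ⟨k, l, hkl, Or.inr rfl⟩
    rw [ladderString_eq_stringMul_majorana (hv hlt)] at hXX hYY
    fin_cases c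
    · exact hYY
    · exact hXX
  rcases lt_or_gt_of_ne hkl.ne with hkl' | hlk
  · exact hlt hkl hkl' c
  · simpa only [fin_two_add_one_add_one] using (hlt hkl.symm hlk (c + 1)).symm

lemma MajoranaBilinearMem.exists_of_walk (hv : StrictMono v)
    (hS : ∀ p ∈ Sspin G v, Complex.I • PauliMat p ∈ L) {j r : Fin N} (w : G.Walk j r)
    (hjr : j ≠ r) : ∃ s : Fin 2, ∀ c, MajoranaBilinearMem L v (r, c) (j, c + s) := by
  induction w with
  | nil => exact absurd rfl hjr
  | @cons j k r hjk w ih =>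
    by_cases hkr : k = r
    · subst hkr
      exact ⟨1, of_adj hv hS hjk.symm⟩
    · obtain ⟨s, hs⟩ := ih hkr
      refine ⟨s + 1, fun c => ?_⟩
      rw [← add_assoc]
      exact (hs c).trans hv.injective (by simp [Ne.symm hkr]) (by simp [hjk.ne.symm])
        (by simp [hjr.symm]) (of_adj hv hS hjk.symm (c + s))

lemma exists_ladderString_mem (hG : G.Connected) (hv : StrictMono v)
    (hS : ∀ p ∈ Sspin G v, Complex.I • PauliMat p ∈ L) (r : Fin N) :
    ∃ a : Fin N → Fin 2,
      (∀ i, r < i →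
        Complex.I • PauliMat (ladderString (v r) (v i) 1 (ltr (a i))) ∈ L ∧
        Complex.I • PauliMat (ladderString (v r) (v i) 2 (ltrBar (a i))) ∈ L) ∧
      (∀ i j, r < i → i < j →
        Complex.I • PauliMat (ladderString (v i) (v j) (ltr (a i)) (ltrBar (a j))) ∈ L ∧
        Complex.I • PauliMat (ladderString (v i) (v j) (ltrBar (a i)) (ltr (a j))) ∈ L) := by
  have hshift : ∀ i, ∃ s : Fin 2, r < i → ∀ c, MajoranaBilinearMem L v (r, c) (i, c + s) := by
    intro i
    by_cases hri : r < i
    · obtain ⟨s, hs⟩ := MajoranaBilinearMem.exists_of_walk hv hS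
        (hG.preconnected i r).some hri.ne'
      exact ⟨s, fun _ => hs⟩
    · exact ⟨0, fun h => absurd h hri⟩
  choose s hs using hshift
  have hpair : ∀ {i j}, r < i → i < j → ∀ c,
      MajoranaBilinearMem L v (i, c + s i) (j, c + s j) := fun hri hij c =>
    (hs _ hri c).symm.trans hv.injective (by simp [hri.ne']) (by simp [(hri.trans hij).ne])
      (by simp [hij.ne]) (hs _ (hri.trans hij) c)
  have hltrBar : ∀ c, ltrBar c = ltr (c + 1) := by decide
  refine ⟨fun i => 1 + s i, fun i hri => ⟨?_, ?_⟩, fun i j hri hij => ⟨?_, ?_⟩⟩ <;>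
    simp only [hltrBar]
  · exact MajoranaBilinearMem.ladderString_mem (c := 0) hv hri (by simpa using hs i hri 1)
  · exact MajoranaBilinearMem.ladderString_mem (c := 1) hv hri
      (by simpa only [add_right_comm] using hs i hri (1 + 1))
  · exact MajoranaBilinearMem.ladderString_mem hv hij
      (by simpa only [add_right_comm] using hpair hri hij (1 + 1))
  · exact MajoranaBilinearMem.ladderString_mem hv hij
      (by simpa only [fin_two_add_one_add_one] using hpair hri hij 1)

end Graph

lemma smul_PauliMat_mem_hamAlg {n : ℕ} {S : Set (Fin n → Fin 4)} {p : Fin n → Fin 4}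
    (hp : p ∈ S) : Complex.I • PauliMat p ∈ hamAlg S :=
  LieSubalgebra.subset_lieSpan ⟨p, hp, rfl⟩

/-- Lemma 1: there are choices of X/Y letters `a i` (spin up) and `b i` (spin down)
such that all the ladder strings `→X_{u 0}P^u_i`, `→Y_{u 0}\bar P^u_i`,
`→P^u_i \bar P^u_{i+1}`, `→\bar P^u_i P^u_{i+1}` (and their spin-down analogues)
lie in the Hamiltonian algebra `g(S₁)`. -/
theorem ladder_strings_mem_hamAlg (N : ℕ) (hN : 1 ≤ N)
    (G : SimpleGraph (Fin N)) (hG : G.Connected)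
    (u d : Fin N → Fin (2 * N)) (hu : StrictMono u) (hd : StrictMono d) :
    ∃ a b : Fin N → Fin 2,
      (∀ i : Fin N, 1 ≤ i.val →
        (Complex.I • PauliMat (ladderString (u ⟨0, hN⟩) (u i) 1 (ltr (a i))) ∈
            hamAlg (Sint G u d ⟨0, hN⟩) ∧
         Complex.I • PauliMat (ladderString (u ⟨0, hN⟩) (u i) 2 (ltrBar (a i))) ∈
            hamAlg (Sint G u d ⟨0, hN⟩) ∧
         Complex.I • PauliMat (ladderString (d ⟨0, hN⟩) (d i) 1 (ltr (b i))) ∈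
            hamAlg (Sint G u d ⟨0, hN⟩) ∧
         Complex.I • PauliMat (ladderString (d ⟨0, hN⟩) (d i) 2 (ltrBar (b i))) ∈
            hamAlg (Sint G u d ⟨0, hN⟩))) ∧
      (∀ i : ℕ, ∀ _h1 : 1 ≤ i, ∀ h2 : i + 1 < N,
        (Complex.I • PauliMat (ladderString (u ⟨i, by omega⟩) (u ⟨i + 1, h2⟩)
              (ltr (a ⟨i, by omega⟩)) (ltrBar (a ⟨i + 1, h2⟩))) ∈
            hamAlg (Sint G u d ⟨0, hN⟩) ∧
         Complex.I • PauliMat (ladderString (u ⟨i, by omega⟩) (u ⟨i + 1, h2⟩)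
              (ltrBar (a ⟨i, by omega⟩)) (ltr (a ⟨i + 1, h2⟩))) ∈
            hamAlg (Sint G u d ⟨0, hN⟩) ∧
         Complex.I • PauliMat (ladderString (d ⟨i, by omega⟩) (d ⟨i + 1, h2⟩)
              (ltr (b ⟨i, by omega⟩)) (ltrBar (b ⟨i + 1, h2⟩))) ∈
            hamAlg (Sint G u d ⟨0, hN⟩) ∧
         Complex.I • PauliMat (ladderString (d ⟨i, by omega⟩) (d ⟨i + 1, h2⟩)
              (ltrBar (b ⟨i, by omega⟩)) (ltr (b ⟨i + 1, h2⟩))) ∈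
            hamAlg (Sint G u d ⟨0, hN⟩))) := by
  obtain ⟨a, hroot_u, hstep_u⟩ := exists_ladderString_mem hG hu
    (fun p hp => smul_PauliMat_mem_hamAlg (Or.inl (Or.inl hp))) ⟨0, hN⟩
  obtain ⟨b, hroot_d, hstep_d⟩ := exists_ladderString_mem hG hd
    (fun p hp => smul_PauliMat_mem_hamAlg (Or.inl (Or.inr hp))) ⟨0, hN⟩
  refine ⟨a, b, fun i hi => ⟨(hroot_u i hi).1, (hroot_u i hi).2, (hroot_d i hi).1,
    (hroot_d i hi).2⟩, fun i hi h2 => ?_⟩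
  have hij : (⟨i, by omega⟩ : Fin N) < ⟨i + 1, h2⟩ := Nat.lt_succ_self i
  exact ⟨(hstep_u _ _ hi hij).1, (hstep_u _ _ hi hij).2, (hstep_d _ _ hi hij).1,
    (hstep_d _ _ hi hij).2⟩
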